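/- For every 0 < β ≤ log 4, the third derivative of c_β satisfies c_β'''(w) < 0 for all w > 0; consequently c_β' is strictly concave on (0, ∞). -/

import Mathlib

noncomputable section

/-- `c_β(t) = log[(1 + e^{−β}(e^t + e^{−t}))/(1 + 2e^{−β})]`. -/
def cBeta (β t : ℝ) : ℝ :=
  Real.log ((1 + Real.exp (-β) * (Real.exp t + Real.exp (-t))) / (1 + 2 * Real.exp (-β)))

/-!
With `b = 2e^{-β}` we have `c_β(t) = log (1 + b cosh t) - log (1 + b)`, whose derivatives are
`b sinh t / D`, `(b cosh t + b²) / D²` and `b sinh t (1 - b cosh t - 2b²) / D³` with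
`D = 1 + b cosh t` (the second one uses `cosh² - sinh² = 1`). For `w > 0` we have `sinh w > 0` and
`cosh w > 1`, so the last factor is below `1 - b - 2b² = (1 - 2b)(1 + b)`, which is `≤ 0` exactly
when `b ≥ 1/2`, i.e. `β ≤ log 4`.
-/

open Real

section LogOneAddMulCosh

variable {b : ℝ}

lemma one_add_mul_cosh_pos (hb : 0 ≤ b) (t : ℝ) : 0 < 1 + b * cosh t := by
  have := cosh_pos t
  positivity

lemma hasDerivAt_log_one_add_mul_cosh (hb : 0 ≤ b) (t : ℝ) :
    HasDerivAt (fun t => log (1 + b * cosh t)) (b * sinh t / (1 + b * cosh t)) t := by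
  have := (((hasDerivAt_cosh t).const_mul b).const_add 1).log (one_add_mul_cosh_pos hb t).ne'
  simpa only [mul_div_assoc] using this

lemma hasDerivAt_mul_sinh_div (hb : 0 ≤ b) (t : ℝ) :
    HasDerivAt (fun t => b * sinh t / (1 + b * cosh t))
      ((b * cosh t + b ^ 2) / (1 + b * cosh t) ^ 2) t := by
  have hD := (one_add_mul_cosh_pos hb t).ne'
  refine (((hasDerivAt_sinh t).const_mul b).div
    (((hasDerivAt_cosh t).const_mul b).const_add 1) hD).congr_deriv ?_
  congr 1
  linear_combination b ^ 2 * cosh_sq t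

lemma hasDerivAt_mul_cosh_add_sq_div (hb : 0 ≤ b) (t : ℝ) :
    HasDerivAt (fun t => (b * cosh t + b ^ 2) / (1 + b * cosh t) ^ 2)
      (b * sinh t * (1 - b * cosh t - 2 * b ^ 2) / (1 + b * cosh t) ^ 3) t := by
  have hD := (one_add_mul_cosh_pos hb t).ne'
  refine ((((hasDerivAt_cosh t).const_mul b).add_const (b ^ 2)).div
    ((((hasDerivAt_cosh t).const_mul b).const_add 1).fun_pow 2) (pow_ne_zero 2 hD)).congr_deriv ?_
  field_simp
  ring

lemma mul_sinh_mul_div_neg (hb : 1 / 2 ≤ b) {w : ℝ} (hw : 0 < w) :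
    b * sinh w * (1 - b * cosh w - 2 * b ^ 2) / (1 + b * cosh w) ^ 3 < 0 := by
  have hcosh : 1 < cosh w := one_lt_cosh.2 hw.ne'
  have hfactor : 1 - b * cosh w - 2 * b ^ 2 < 0 := by nlinarith
  have hsinh : 0 < b * sinh w := mul_pos (by linarith) (sinh_pos_iff.2 hw)
  exact div_neg_of_neg_of_pos (mul_neg_of_pos_of_neg hsinh hfactor)
    (pow_pos (one_add_mul_cosh_pos (by linarith) w) 3)

end LogOneAddMulCosh

lemma cBeta_eq_log_sub_log (β : ℝ) :
    cBeta β = fun t => log (1 + 2 * exp (-β) * cosh t) - log (1 + 2 * exp (-β)) := by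
  funext t
  rw [cBeta, log_div (by positivity) (by positivity), cosh_eq]
  ring_nf

lemma deriv_cBeta (β : ℝ) :
    deriv (cBeta β) = fun t => 2 * exp (-β) * sinh t / (1 + 2 * exp (-β) * cosh t) := by
  funext t
  rw [cBeta_eq_log_sub_log]
  exact ((hasDerivAt_log_one_add_mul_cosh (by positivity) t).sub_const _).deriv

lemma half_le_two_mul_exp_neg {β : ℝ} (hβ : β ≤ log 4) : 1 / 2 ≤ 2 * exp (-β) := by
  have : exp (-log 4) ≤ exp (-β) := exp_le_exp.2 (neg_le_neg hβ)
  rw [exp_neg, exp_log (by norm_num)] at this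
  linarith

theorem cBeta_third_deriv_neg_general (β : ℝ) (hβ : β ≤ Real.log 4) :
    (∀ w : ℝ, 0 < w → iteratedDeriv 3 (cBeta β) w < 0) ∧
    StrictConcaveOn ℝ (Set.Ioi (0 : ℝ)) (deriv (cBeta β)) := by
  set b := 2 * exp (-β)
  have hb : 1 / 2 ≤ b := half_le_two_mul_exp_neg hβ
  have hb0 : 0 ≤ b := by linarith
  have hderiv2 : deriv^[2] (deriv (cBeta β)) =
      fun t => b * sinh t * (1 - b * cosh t - 2 * b ^ 2) / (1 + b * cosh t) ^ 3 := by
    funext t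
    simp only [Function.iterate_succ, Function.iterate_zero, Function.comp_apply, deriv_cBeta]
    rw [funext fun s => (hasDerivAt_mul_sinh_div hb0 s).deriv]
    exact (hasDerivAt_mul_cosh_add_sq_div hb0 t).deriv
  refine ⟨fun w hw => ?_, ?_⟩
  · rw [iteratedDeriv_eq_iterate, Function.iterate_succ, Function.comp_apply, hderiv2]
    exact mul_sinh_mul_div_neg hb hw
  · refine strictConcaveOn_of_deriv2_neg (convex_Ioi 0) ?_ fun w hw => ?_
    · rw [deriv_cBeta]
      exact (continuous_const.mul continuous_sinh).continuousOn.div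
        (continuous_const.add (continuous_const.mul continuous_cosh)).continuousOn
        fun t _ => (one_add_mul_cosh_pos hb0 t).ne'
    · rw [interior_Ioi] at hw
      rw [hderiv2]
      exact mul_sinh_mul_div_neg hb hw

/-- For `0 < β ≤ log 4`, `c_β'''(w) < 0` for all `w > 0`; consequently
`c_β'` is strictly concave on `(0, ∞)`. -/
theorem cBeta_third_deriv_neg (β : ℝ) (hβ0 : 0 < β) (hβ : β ≤ Real.log 4) :
    (∀ w : ℝ, 0 < w → iteratedDeriv 3 (cBeta β) w < 0) ∧
    StrictConcaveOn ℝ (Set.Ioi (0 : ℝ)) (deriv (cBeta β)) :=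
  cBeta_third_deriv_neg_general β hβ
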